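/- arXiv:2503.07134 — 4 statements merged into one kernel-verified Lean document; each statement's English description precedes it below -/
import Mathlib

section
/- Let M be a nonempty closed subset of a Banach space X, let (a_n) be a sequence of positive reals with a convergent series, and let A : M → M satisfy ‖Aⁿx − Aⁿy‖ ≤ a_n·‖x − y‖ for all x, y ∈ M and all n ∈ ℕ. Then A has exactly one fixed point x ∈ M, this fixed point is the limit of the iteration x_n = A x_{n−1} for any starting point x₀ ∈ M, and the error estimate ‖x − x_n‖ ≤ (∑_{k≥n} a_k)·‖x₁ − x₀‖ holds. -/
/-!
The consecutive iterates of `x₀` satisfy `dist (Aⁿ x₀) (Aⁿ⁺¹ x₀) ≤ aₙ · dist x₀ (A x₀)`, so the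
orbit is Cauchy with error bounded by the tail sum of `a`; its limit lies in `M` and is fixed
because `A = A¹` is Lipschitz on `M`. Since `aₙ → 0`, the orbit of every point of `M` is drawn
to that fixed point, which gives both convergence from any start and uniqueness.
-/

open Filter Function Set Topology

theorem isFixedPt_of_tendsto_iterate_of_continuousWithinAt {α : Type*} [TopologicalSpace α]
    [T2Space α] {f : α → α} {s : Set α} {x y : α} (hxs : ∀ n, f^[n] x ∈ s)
    (hy : Tendsto (fun n => f^[n] x) atTop (𝓝 y)) (hf : ContinuousWithinAt f s y) :
    IsFixedPt f y := by
  have h_succ : Tendsto (fun n => f (f^[n] x)) atTop (𝓝 y) := by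
    simpa only [comp_def, iterate_succ_apply'] using hy.comp (tendsto_add_atTop_nat 1)
  exact tendsto_nhds_unique
    (hf.tendsto.comp (tendsto_nhdsWithin_iff.2 ⟨hy, .of_forall hxs⟩)) h_succ

section IterateLipschitz

variable {α : Type*} [MetricSpace α] {f : α → α} {s : Set α} {a : ℕ → ℝ}

theorem dist_iterate_iterate_succ_le
    (hfs : MapsTo f s s) (hf : ∀ x ∈ s, ∀ y ∈ s, ∀ n, dist (f^[n] x) (f^[n] y) ≤ a n * dist x y)
    {x : α} (hx : x ∈ s) (n : ℕ) : dist (f^[n] x) (f^[n + 1] x) ≤ a n * dist x (f x) := by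
  rw [iterate_succ_apply]
  exact hf x hx (f x) (hfs hx) n

theorem cauchySeq_iterate_of_summable
    (hfs : MapsTo f s s) (hf : ∀ x ∈ s, ∀ y ∈ s, ∀ n, dist (f^[n] x) (f^[n] y) ≤ a n * dist x y)
    (ha : Summable a) {x : α} (hx : x ∈ s) : CauchySeq fun n => f^[n] x :=
  cauchySeq_of_dist_le_of_summable _ (dist_iterate_iterate_succ_le hfs hf hx) (ha.mul_right _)

theorem dist_iterate_le_tsum_mul
    (hfs : MapsTo f s s) (hf : ∀ x ∈ s, ∀ y ∈ s, ∀ n, dist (f^[n] x) (f^[n] y) ≤ a n * dist x y)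
    (ha : Summable a) {x y : α} (hx : x ∈ s) (hy : Tendsto (fun n => f^[n] x) atTop (𝓝 y))
    (n : ℕ) : dist (f^[n] x) y ≤ (∑' k, a (n + k)) * dist x (f x) := by
  rw [← tsum_mul_right]
  exact dist_le_tsum_of_dist_le_of_tendsto _ (dist_iterate_iterate_succ_le hfs hf hx)
    (ha.mul_right _) hy n

theorem tendsto_iterate_of_isFixedPt
    (hf : ∀ x ∈ s, ∀ y ∈ s, ∀ n, dist (f^[n] x) (f^[n] y) ≤ a n * dist x y)
    (ha : Tendsto a atTop (𝓝 0)) {p x : α} (hp : IsFixedPt f p) (hps : p ∈ s) (hx : x ∈ s) :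
    Tendsto (fun n => f^[n] x) atTop (𝓝 p) := by
  rw [tendsto_iff_dist_tendsto_zero]
  refine squeeze_zero (fun _ => dist_nonneg) (fun n => ?_) (by simpa using ha.mul_const (dist x p))
  simpa only [(hp.iterate n).eq] using hf x hx p hps n

theorem exists_mem_isFixedPt_of_summable [CompleteSpace α] (hs : IsClosed s)
    (hfs : MapsTo f s s) (hf : ∀ x ∈ s, ∀ y ∈ s, ∀ n, dist (f^[n] x) (f^[n] y) ≤ a n * dist x y)
    (ha : Summable a) (hne : s.Nonempty) : ∃ p ∈ s, IsFixedPt f p := by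
  obtain ⟨x, hx⟩ := hne
  obtain ⟨p, hp⟩ := cauchySeq_tendsto_of_complete (cauchySeq_iterate_of_summable hfs hf ha hx)
  have h_orbit : ∀ n, f^[n] x ∈ s := fun n => hfs.iterate n hx
  have hps : p ∈ s := hs.mem_of_tendsto hp (.of_forall h_orbit)
  have h_lip : LipschitzOnWith (a 1).toNNReal f s :=
    LipschitzOnWith.of_dist_le_mul fun x hx y hy =>
      (hf x hx y hy 1).trans (mul_le_mul_of_nonneg_right (Real.le_coe_toNNReal _) dist_nonneg)
  exact ⟨p, hps, isFixedPt_of_tendsto_iterate_of_continuousWithinAt h_orbit hp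
    (h_lip.continuousOn p hps)⟩

end IterateLipschitz

theorem weissinger_fixed_point_general
    {X : Type*} [NormedAddCommGroup X] [CompleteSpace X]
    (M : Set X) (hM : M.Nonempty) (hMc : IsClosed M)
    (a : ℕ → ℝ) (ha_sum : Summable a)
    (A : X → X) (hA : Set.MapsTo A M M)
    (hcontr : ∀ x ∈ M, ∀ y ∈ M, ∀ n : ℕ, ‖A^[n] x - A^[n] y‖ ≤ a n * ‖x - y‖) :
    ∃ x ∈ M, A x = x ∧ (∀ y ∈ M, A y = y → y = x) ∧
      ∀ x₀ ∈ M,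
        Filter.Tendsto (fun n => A^[n] x₀) Filter.atTop (nhds x) ∧
        ∀ n : ℕ, ‖x - A^[n] x₀‖ ≤ (∑' k : ℕ, a (n + k)) * ‖A x₀ - x₀‖ := by
  have hdist : ∀ x ∈ M, ∀ y ∈ M, ∀ n, dist (A^[n] x) (A^[n] y) ≤ a n * dist x y := by
    simpa only [dist_eq_norm] using hcontr
  obtain ⟨p, hpM, hp⟩ := exists_mem_isFixedPt_of_summable hMc hA hdist ha_sum hM
  have h_attract : ∀ x ∈ M, Tendsto (fun n => A^[n] x) atTop (𝓝 p) := fun x hx =>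
    tendsto_iterate_of_isFixedPt hdist ha_sum.tendsto_atTop_zero hp hpM hx
  refine ⟨p, hpM, hp, fun y hyM hy => ?_, fun x hx => ⟨h_attract x hx, fun n => ?_⟩⟩
  · simpa only [iterate_fixed hy, tendsto_const_nhds_iff] using h_attract y hyM
  · rw [← dist_eq_norm, ← dist_eq_norm, dist_comm, dist_comm (A x)]
    exact dist_iterate_le_tsum_mul hA hdist ha_sum hx (h_attract x hx) n

/-- Weissinger's fixed point theorem. -/
theorem weissinger_fixed_point
    {X : Type*} [NormedAddCommGroup X] [NormedSpace ℝ X] [CompleteSpace X]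
    (M : Set X) (hM : M.Nonempty) (hMc : IsClosed M)
    (a : ℕ → ℝ) (ha_pos : ∀ n, 0 < a n) (ha_sum : Summable a)
    (A : X → X) (hA : Set.MapsTo A M M)
    (hcontr : ∀ x ∈ M, ∀ y ∈ M, ∀ n : ℕ, ‖A^[n] x - A^[n] y‖ ≤ a n * ‖x - y‖) :
    ∃ x ∈ M, A x = x ∧ (∀ y ∈ M, A y = y → y = x) ∧
      ∀ x₀ ∈ M,
        Filter.Tendsto (fun n => A^[n] x₀) Filter.atTop (nhds x) ∧
        ∀ n : ℕ, ‖x - A^[n] x₀‖ ≤ (∑' k : ℕ, a (n + k)) * ‖A x₀ - x₀‖ :=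
  weissinger_fixed_point_general M hM hMc a ha_sum A hA hcontr
end

section
/- Let A : [0,∞) → ℝ^{n×n} and a : [0,∞) → ℝⁿ be piecewise continuous on every finite interval, with t ↦ ‖A(t)‖ and t ↦ |a(t)| integrable over [0,∞). Then for every ζ ∈ ℝⁿ and every τ ∈ [0,∞] there exists a unique solution x of ẋ(t) = A(t)x(t) + a(t) with x(τ) = ζ (where x(∞) means lim_{t→∞} x(t)); in particular the solution is bounded and has a limit at infinity. -/
/-!
Extend `A` and `a` by zero to the whole line and write the problem as the integral equation
`x t = ζ + ∫_τ^t (A x + a)`, where `∫_∞^t = -∫_t^∞`. With `m t = |∫_τ^t ‖A‖|`, the fundamental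
theorem of calculus for the absolutely continuous `m` gives `∫ ‖A‖ m^k ≤ m(t)^(k+1)/(k+1)` over
the interval between `τ` and `t`. Iterating, the `k`-th Picard iterate is Lipschitz with constant
`(∫ ‖A‖)^k / k!` on bounded continuous functions, so some iterate is a contraction and its fixed
point solves the problem. The same iteration, applied to the difference of two solutions, which is
bounded between `τ` and `t`, bounds it by `D m(t)^k / k! → 0`: solutions are unique.
-/

/-- `f` is piecewise continuous on `[a,b]`. -/
def PiecewiseContinuousOn {E : Type*} [NormedAddCommGroup E]
    (f : ℝ → E) (a b : ℝ) : Prop :=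
  ∃ s : Finset ℝ,
    (∀ t ∈ Set.Icc a b, t ∉ s → ContinuousWithinAt f (Set.Icc a b) t) ∧
    (∀ t ∈ s, ∃ L : E, Filter.Tendsto f (nhdsWithin t (Set.Iio t)) (nhds L)) ∧
    (∀ t ∈ s, ContinuousWithinAt f (Set.Ici t) t)

open MeasureTheory Set Filter Topology intervalIntegral
open scoped BoundedContinuousFunction

theorem intervalIntegral.integral_mul_pow_of_eq_add_integral {f G : ℝ → ℝ} {a b : ℝ}
    (hf : IntervalIntegrable f volume a b) (hG : ∀ s ∈ uIcc a b, G s = G a + ∫ u in a..s, f u)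
    (k : ℕ) :
    ∫ s in a..b, f s * G s ^ k = (G b ^ (k + 1) - G a ^ (k + 1)) / (k + 1) := by
  set H : ℝ → ℝ := fun s => G a + ∫ u in a..s, f u
  have hHac : AbsolutelyContinuousOnInterval (fun s => H s ^ (k + 1)) a b := by
    have hH : AbsolutelyContinuousOnInterval H a b :=
      (LipschitzWith.const (G a)).lipschitzOnWith.absolutelyContinuousOnInterval.add
        (hf.absolutelyContinuousOnInterval_intervalIntegral left_mem_uIcc)
    induction k with
    | zero => simpa using hH
    | succ m ih => simpa [pow_succ] using ih.fun_mul hH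
  have hderiv : ∀ᵐ s, s ∈ uIoc a b →
      deriv (fun s => H s ^ (k + 1)) s = (k + 1) * (f s * H s ^ k) := by
    filter_upwards [hf.ae_hasDerivAt_integral] with s hs hsab
    have := (((hs (uIoc_subset_uIcc hsab)) a left_mem_uIcc).const_add (G a)).pow (k + 1)
    rw [show (fun s => H s ^ (k + 1)) = (fun s => G a + ∫ u in a..s, f u) ^ (k + 1) from rfl,
      this.deriv]
    push_cast; ring
  have hFTC := hHac.integral_deriv_eq_sub
  rw [integral_congr_ae hderiv, intervalIntegral.integral_const_mul] at hFTC
  rw [integral_congr (fun s hs => by rw [hG s hs]), hG b right_mem_uIcc,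
    eq_div_iff (by positivity), mul_comm]
  simpa [H] using hFTC

theorem exists_forall_norm_le_of_tendsto {E : Type*} [SeminormedAddCommGroup E] {d : ℝ → E}
    {t : ℝ} (hd : ContinuousOn d (Ici t)) {L : E} (hL : Tendsto d atTop (𝓝 L)) :
    ∃ C, ∀ s ∈ Ici t, ‖d s‖ ≤ C := by
  obtain ⟨T, hT⟩ :=
    eventually_atTop.1 (hL.norm.eventually (eventually_le_nhds (lt_add_one ‖L‖)))
  obtain ⟨C, hC⟩ := isCompact_Icc.exists_bound_of_continuousOn (hd.mono Icc_subset_Ici_self)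
  refine ⟨max C (‖L‖ + 1), fun s hs => ?_⟩
  rcases le_total s T with h | h
  · exact (hC s ⟨hs, h⟩).trans (le_max_left _ _)
  · exact (hT s h).trans (le_max_right _ _)

variable {V : Type*} [NormedAddCommGroup V] [NormedSpace ℝ V]

noncomputable def integralFrom (g : ℝ → V) : WithTop ℝ → ℝ → V
  | ⊤, t => -∫ s in Ioi t, g s
  | (r : ℝ), t => ∫ s in r..t, g s

def between : WithTop ℝ → ℝ → Set ℝ
  | ⊤, t => Ioi t
  | (r : ℝ), t => uIoc r t

@[simp] theorem between_coe (r t : ℝ) : between r t = uIoc r t := rfl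

theorem measurableSet_between (τ : WithTop ℝ) (t : ℝ) : MeasurableSet (between τ t) := by
  cases τ with
  | top => exact measurableSet_Ioi
  | coe r => exact measurableSet_uIoc

theorem between_subset_between {τ : WithTop ℝ} {s t : ℝ} (hs : s ∈ between τ t) :
    between τ s ⊆ between τ t := by
  cases τ with
  | top => exact Ioi_subset_Ioi (le_of_lt hs)
  | coe r =>
    exact uIoc_subset_uIoc_of_uIcc_subset_uIcc
      (uIcc_subset_uIcc left_mem_uIcc (uIoc_subset_uIcc hs))

section integralFrom

variable {g : ℝ → V}

@[simp] theorem integralFrom_top (t : ℝ) : integralFrom g ⊤ t = -∫ s in Ioi t, g s := rfl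

@[simp] theorem integralFrom_coe (r t : ℝ) : integralFrom g r t = ∫ s in r..t, g s := rfl

theorem integralFrom_sub_integralFrom (hg : Integrable g) (τ : WithTop ℝ) (t t' : ℝ) :
    integralFrom g τ t - integralFrom g τ t' = ∫ s in t'..t, g s := by
  cases τ with
  | top => exact (neg_sub_neg _ _).trans (integral_Ioi_sub_Ioi' hg.integrableOn hg.integrableOn)
  | coe r => exact integral_interval_sub_left hg.intervalIntegrable hg.intervalIntegrable

theorem continuous_integralFrom (hg : Integrable g) (τ : WithTop ℝ) :
    Continuous (integralFrom g τ) := by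
  have h : integralFrom g τ = fun t => integralFrom g τ 0 + ∫ s in 0..t, g s := by
    ext t; rw [← integralFrom_sub_integralFrom hg]; abel
  rw [h]
  exact continuous_const.add (continuous_primitive (fun _ _ => hg.intervalIntegrable) 0)

theorem tendsto_integralFrom_atTop (hg : Integrable g) (τ : WithTop ℝ) :
    Tendsto (integralFrom g τ) atTop (𝓝 (integralFrom g τ 0 + ∫ s in Ioi 0, g s)) := by
  refine (tendsto_const_nhds.add
    (intervalIntegral_tendsto_integral_Ioi 0 hg.integrableOn tendsto_id)).congr fun t => ?_
  rw [id, ← integralFrom_sub_integralFrom hg τ t 0]; abel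

theorem tendsto_integralFrom_top (hg : Integrable g) :
    Tendsto (integralFrom g ⊤) atTop (𝓝 0) := by
  simpa [integralFrom] using tendsto_integralFrom_atTop hg ⊤

theorem norm_integralFrom_le (τ : WithTop ℝ) (t : ℝ) :
    ‖integralFrom g τ t‖ ≤ ∫ s in between τ t, ‖g s‖ := by
  cases τ with
  | top => exact (norm_neg _).trans_le (norm_integral_le_integral_norm g)
  | coe r => exact norm_integral_le_integral_norm_uIoc

theorem norm_integralFrom_le_integral_norm (hg : Integrable g) (τ : WithTop ℝ) (t : ℝ) :
    ‖integralFrom g τ t‖ ≤ ∫ s, ‖g s‖ :=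
  (norm_integralFrom_le τ t).trans
    (setIntegral_le_integral hg.norm (Eventually.of_forall fun _ => norm_nonneg _))

theorem integralFrom_sub {g' : ℝ → V} (hg : Integrable g) (hg' : Integrable g')
    (τ : WithTop ℝ) (t : ℝ) :
    integralFrom (fun s => g s - g' s) τ t = integralFrom g τ t - integralFrom g' τ t := by
  cases τ with
  | top => simp only [integralFrom, integral_sub hg.integrableOn hg'.integrableOn]; abel
  | coe r => exact integral_sub hg.intervalIntegrable hg'.intervalIntegrable

end integralFrom
section Volterra

variable {f : ℝ → ℝ}

theorem integralFrom_nonpos (hf0 : 0 ≤ f) {τ : WithTop ℝ} {s : ℝ} (hs : (s : WithTop ℝ) ≤ τ) :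
    integralFrom f τ s ≤ 0 := by
  cases τ with
  | top => exact neg_nonpos.2 (setIntegral_nonneg measurableSet_Ioi fun u _ => hf0 u)
  | coe r =>
    rw [integralFrom_coe, integral_symm]
    exact neg_nonpos.2 (integral_nonneg (WithTop.coe_le_coe.1 hs) fun u _ => hf0 u)

theorem integrable_mul_pow_abs_integralFrom (hf : Integrable f) (τ : WithTop ℝ) (k : ℕ) :
    Integrable (fun s => f s * |integralFrom f τ s| ^ k) :=
  hf.mul_bdd ((continuous_integralFrom hf τ).abs.pow k).aestronglyMeasurable
    (Eventually.of_forall fun s => by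
      rw [norm_pow, Real.norm_eq_abs, abs_abs, ← Real.norm_eq_abs]
      exact pow_le_pow_left₀ (norm_nonneg _) (norm_integralFrom_le_integral_norm hf τ s) k)

theorem integral_mul_pow_abs_integralFrom_le_of_coe_le (hf : Integrable f) (hf0 : 0 ≤ f)
    {τ : WithTop ℝ} {t T : ℝ} (htT : t ≤ T) (hT : (T : WithTop ℝ) ≤ τ) (k : ℕ) :
    ∫ s in t..T, f s * |integralFrom f τ s| ^ k ≤ |integralFrom f τ t| ^ (k + 1) / (k + 1) := by
  set I := integralFrom f τ
  have hI : ∀ s ≤ T, |I s| = -I s := fun s hs =>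
    abs_of_nonpos (integralFrom_nonpos hf0 ((WithTop.coe_le_coe.2 hs).trans hT))
  have hFTC := integral_mul_pow_of_eq_add_integral (f := fun s => -f s) (G := fun s => -I s)
    hf.neg.intervalIntegrable (a := T) (b := t) (fun s _ => by
      rw [intervalIntegral.integral_neg, ← integralFrom_sub_integralFrom hf]; ring) k
  have hIT : 0 ≤ (-I T) ^ (k + 1) := pow_nonneg (by rw [← hI T le_rfl]; exact abs_nonneg _) _
  calc ∫ s in t..T, f s * |I s| ^ k = ∫ s in T..t, -f s * (-I s) ^ k := by
        rw [integral_symm, ← intervalIntegral.integral_neg]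
        refine integral_congr fun s hs => ?_
        rw [uIcc_of_ge htT] at hs
        rw [hI s hs.2]; ring
    _ = ((-I t) ^ (k + 1) - (-I T) ^ (k + 1)) / (k + 1) := hFTC
    _ ≤ |I t| ^ (k + 1) / (k + 1) := by
        rw [hI t htT]; gcongr; linarith

theorem integral_between_mul_pow_abs_integralFrom_le (hf : Integrable f) (hf0 : 0 ≤ f)
    (τ : WithTop ℝ) (t : ℝ) (k : ℕ) :
    ∫ s in between τ t, f s * |integralFrom f τ s| ^ k ≤
      |integralFrom f τ t| ^ (k + 1) / (k + 1) := by
  cases τ with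
  | top =>
    exact le_of_tendsto (intervalIntegral_tendsto_integral_Ioi t
      (integrable_mul_pow_abs_integralFrom hf ⊤ k).integrableOn tendsto_id)
      ((eventually_ge_atTop t).mono fun T hT =>
        integral_mul_pow_abs_integralFrom_le_of_coe_le hf hf0 hT le_top k)
  | coe r =>
    rcases le_total r t with h | h
    · rw [between_coe, uIoc_of_le h, ← integral_of_le h]
      refine (integral_mul_pow_of_eq_add_integral hf.intervalIntegrable
        (fun s hs => ?_) k).trans_le ?_
      · rw [uIcc_of_le h] at hs
        simp [abs_of_nonneg (integral_nonneg hs.1 fun u _ => hf0 u)]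
      · simp
    · rw [between_coe, uIoc_of_ge h, ← integral_of_le h]
      exact integral_mul_pow_abs_integralFrom_le_of_coe_le hf hf0 h le_rfl k

theorem integral_between_le_of_le_mul_pow (hf : Integrable f) (hf0 : 0 ≤ f) {φ : ℝ → ℝ}
    (hφ0 : 0 ≤ φ) {D : ℝ} (hD : 0 ≤ D) {τ : WithTop ℝ} {t : ℝ} {k : ℕ}
    (hφ : ∀ s ∈ between τ t, φ s ≤ f s * (D * |integralFrom f τ s| ^ k / k.factorial)) :
    ∫ s in between τ t, φ s ≤ D * |integralFrom f τ t| ^ (k + 1) / (k + 1).factorial := by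
  calc ∫ s in between τ t, φ s
      ≤ ∫ s in between τ t, f s * (D * |integralFrom f τ s| ^ k / k.factorial) :=
        integral_mono_of_nonneg (Eventually.of_forall hφ0)
          (((integrable_mul_pow_abs_integralFrom hf τ k).const_mul
            (D / k.factorial)).integrableOn.congr_fun (fun s _ => by ring)
            (measurableSet_between τ t))
          ((ae_restrict_iff' (measurableSet_between τ t)).2 (Eventually.of_forall hφ))
    _ = D / k.factorial * ∫ s in between τ t, f s * |integralFrom f τ s| ^ k := by
        rw [← MeasureTheory.integral_const_mul]; congr 1; ext s; ring
    _ ≤ D / k.factorial * (|integralFrom f τ t| ^ (k + 1) / (k + 1)) := by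
        gcongr; exact integral_between_mul_pow_abs_integralFrom_le hf hf0 τ t k
    _ = D * |integralFrom f τ t| ^ (k + 1) / (k + 1).factorial := by
        rw [Nat.factorial_succ]; push_cast; field_simp

theorem le_zero_of_le_integral_between (hf : Integrable f) (hf0 : 0 ≤ f) {φ ψ : ℝ → ℝ}
    (hψ0 : 0 ≤ ψ) (hψ : ∀ u, ψ u ≤ f u * φ u) {τ : WithTop ℝ} {t : ℝ}
    (hbdd : BddAbove (φ '' between τ t))
    (hφ : ∀ s ∈ insert t (between τ t), φ s ≤ ∫ u in between τ s, ψ u) : φ t ≤ 0 := by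
  obtain ⟨D, hD⟩ := hbdd
  set I := integralFrom f τ
  have step : ∀ {s : ℝ} {k : ℕ}, s ∈ insert t (between τ t) →
      (∀ u ∈ between τ s, φ u ≤ max D 0 * |I u| ^ k / k.factorial) →
      φ s ≤ max D 0 * |I s| ^ (k + 1) / (k + 1).factorial := fun hs hk =>
    (hφ _ hs).trans (integral_between_le_of_le_mul_pow hf hf0 hψ0 (le_max_right D 0)
      fun u hu => (hψ u).trans (mul_le_mul_of_nonneg_left (hk u hu) (hf0 u)))
  have hbound : ∀ k, ∀ s ∈ between τ t, φ s ≤ max D 0 * |I s| ^ k / k.factorial := by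
    intro k
    induction k with
    | zero => exact fun s hs => by simpa using le_max_of_le_left (hD (mem_image_of_mem φ hs))
    | succ k ih =>
      exact fun s hs =>
        step (mem_insert_of_mem t hs) fun u hu => ih u (between_subset_between hs hu)
  have hlim :
      Tendsto (fun k => max D 0 * (|I t| ^ (k + 1) / (k + 1).factorial)) atTop (𝓝 0) := by
    simpa using ((FloorSemiring.tendsto_pow_div_factorial_atTop |I t|).comp
      (tendsto_add_atTop_nat 1)).const_mul (max D 0)
  refine ge_of_tendsto hlim (Eventually.of_forall fun k => ?_)
  rw [← mul_div_assoc]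
  exact step (mem_insert t _) (hbound k)

end Volterra

section linear

variable {A : ℝ → V →L[ℝ] V} {a : ℝ → V}

theorem integrableOn_apply (hA : Integrable A) {S : Set ℝ} (hS : MeasurableSet S) {x : ℝ → V}
    (hx : ContinuousOn x S) {C : ℝ} (hC : ∀ s ∈ S, ‖x s‖ ≤ C) :
    IntegrableOn (fun s => A s (x s)) S :=
  Integrable.mono' (hA.norm.integrableOn.mul_const C)
    (isBoundedBilinearMap_apply.continuous.comp_aestronglyMeasurable
      (hA.aestronglyMeasurable.restrict.prodMk (hx.aestronglyMeasurable hS)))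
    ((ae_restrict_iff' hS).2 (Eventually.of_forall fun s hs =>
      (A s).le_opNorm_of_le (hC s hs)))

theorem intervalIntegrable_apply (hA : Integrable A) {x : ℝ → V} {b c : ℝ}
    (hx : ContinuousOn x (uIcc b c)) : IntervalIntegrable (fun s => A s (x s)) volume b c := by
  obtain ⟨C, hC⟩ := isCompact_uIcc.exists_bound_of_continuousOn hx
  exact (integrableOn_apply hA measurableSet_uIcc hx hC).intervalIntegrable

theorem integrable_apply_add (hA : Integrable A) (ha : Integrable a) (x : ℝ →ᵇ V) :
    Integrable (fun s => A s (x s) + a s) :=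
  (integrableOn_univ.1 (integrableOn_apply hA MeasurableSet.univ x.continuous.continuousOn
    fun s _ => x.norm_coe_le_norm s)).add ha

noncomputable def picardMap (hA : Integrable A) (ha : Integrable a) (ζ : V) (τ : WithTop ℝ)
    (x : ℝ →ᵇ V) : ℝ →ᵇ V :=
  BoundedContinuousFunction.const ℝ ζ + BoundedContinuousFunction.ofNormedAddCommGroup _
    (continuous_integralFrom (integrable_apply_add hA ha x) τ) _
    (norm_integralFrom_le_integral_norm (integrable_apply_add hA ha x) τ)

theorem picardMap_apply (hA : Integrable A) (ha : Integrable a) (ζ : V) (τ : WithTop ℝ)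
    (x : ℝ →ᵇ V) (t : ℝ) :
    picardMap hA ha ζ τ x t = ζ + integralFrom (fun s => A s (x s) + a s) τ t := rfl

theorem norm_picardMap_iterate_sub_le (hA : Integrable A) (ha : Integrable a) (ζ : V)
    (τ : WithTop ℝ) (k : ℕ) (x y : ℝ →ᵇ V) (t : ℝ) :
    ‖(picardMap hA ha ζ τ)^[k] x t - (picardMap hA ha ζ τ)^[k] y t‖ ≤
      dist x y * |integralFrom (‖A ·‖) τ t| ^ k / k.factorial := by
  induction k generalizing t with
  | zero => simpa [← dist_eq_norm] using x.dist_coe_le_dist t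
  | succ k ih =>
    set xk := (picardMap hA ha ζ τ)^[k] x
    set yk := (picardMap hA ha ζ τ)^[k] y
    have hdiff :
        (fun s => A s (xk s) + a s - (A s (yk s) + a s)) = fun s => A s (xk s - yk s) := by
      ext s; simp [map_sub]
    rw [Function.iterate_succ_apply', Function.iterate_succ_apply', picardMap_apply,
      picardMap_apply, add_sub_add_left_eq_sub, ← integralFrom_sub (integrable_apply_add hA ha xk)
        (integrable_apply_add hA ha yk), hdiff]
    exact (norm_integralFrom_le τ t).trans (integral_between_le_of_le_mul_pow hA.norm
      (fun _ => norm_nonneg _) (fun _ => norm_nonneg _) dist_nonneg fun s _ =>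
        (A s).le_opNorm_of_le (ih s))

theorem integral_norm_pow_div_factorial_nonneg (A : ℝ → V →L[ℝ] V) (k : ℕ) :
    0 ≤ (∫ s, ‖A s‖) ^ k / k.factorial :=
  div_nonneg (pow_nonneg (integral_nonneg fun _ => norm_nonneg _) k) k.factorial.cast_nonneg

theorem dist_picardMap_iterate_le (hA : Integrable A) (ha : Integrable a) (ζ : V)
    (τ : WithTop ℝ) (k : ℕ) (x y : ℝ →ᵇ V) :
    dist ((picardMap hA ha ζ τ)^[k] x) ((picardMap hA ha ζ τ)^[k] y) ≤
      (∫ s, ‖A s‖) ^ k / k.factorial * dist x y := by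
  refine (BoundedContinuousFunction.dist_le
    (mul_nonneg (integral_norm_pow_div_factorial_nonneg A k) dist_nonneg)).2 fun t => ?_
  rw [dist_eq_norm, mul_comm]
  refine (norm_picardMap_iterate_sub_le hA ha ζ τ k x y t).trans ?_
  rw [mul_div_assoc]
  gcongr
  simpa using norm_integralFrom_le_integral_norm hA.norm τ t

theorem exists_eq_add_integralFrom [CompleteSpace V] (hA : Integrable A) (ha : Integrable a)
    (ζ : V) (τ : WithTop ℝ) :
    ∃ x : ℝ →ᵇ V, ∀ t, x t = ζ + integralFrom (fun s => A s (x s) + a s) τ t := by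
  obtain ⟨k, hk⟩ := ((FloorSemiring.tendsto_pow_div_factorial_atTop (∫ s, ‖A s‖)).eventually
    (gt_mem_nhds zero_lt_one)).exists
  have hcontr : ContractingWith ⟨_, integral_norm_pow_div_factorial_nonneg A k⟩
      (picardMap hA ha ζ τ)^[k] :=
    ⟨hk, LipschitzWith.of_dist_le_mul (dist_picardMap_iterate_le hA ha ζ τ k)⟩
  exact ⟨_, fun t => (congrArg (· t) hcontr.isFixedPt_fixedPoint_iterate).symm⟩

theorem eqOn_zero_of_eq_integral (hA : Integrable A) {τ : WithTop ℝ} (hτ : 0 ≤ τ) {d : ℝ → V}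
    (hd : ContinuousOn d (Ici 0)) (hdeq : ∀ t ∈ Ici (0 : ℝ), d t = d 0 + ∫ s in 0..t, A s (d s))
    (hfin : ∀ r : ℝ, τ = r → d r = 0) (htop : τ = ⊤ → Tendsto d atTop (𝓝 0)) :
    EqOn d 0 (Ici 0) := by
  intro t ht
  have hincr : ∀ s ∈ Ici (0 : ℝ), ∀ T ∈ Ici (0 : ℝ), d T - d s = ∫ u in s..T, A u (d u) := by
    have hii : ∀ b ∈ Ici (0 : ℝ), IntervalIntegrable (fun u => A u (d u)) volume 0 b :=
      fun b hb => intervalIntegrable_apply hA (hd.mono fun u hu => le_trans (le_min le_rfl hb) hu.1)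
    intro s hs T hT
    rw [hdeq T hT, hdeq s hs, add_sub_add_left_eq_sub,
      integral_interval_sub_left (hii T hT) (hii s hs)]
  suffices hanch : BddAbove ((‖d ·‖) '' between τ t) ∧
      ∀ s ∈ insert t (between τ t), d s = integralFrom (fun u => A u (d u)) τ s by
    exact norm_le_zero_iff.1 (le_zero_of_le_integral_between hA.norm (fun _ => norm_nonneg _)
      (fun _ => norm_nonneg _) (fun u => (A u).le_opNorm (d u)) hanch.1
      fun s hs => (hanch.2 s hs).symm ▸ norm_integralFrom_le τ s)
  cases τ with
  | top =>
    obtain ⟨C, hC⟩ := exists_forall_norm_le_of_tendsto (hd.mono (Ici_subset_Ici.2 ht)) (htop rfl)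
    refine ⟨⟨C, forall_mem_image.2 fun s hs => hC s (le_of_lt (show t < s from hs))⟩,
      fun s hs => ?_⟩
    have hts : t ≤ s := by rcases hs with rfl | hs; exacts [le_rfl, le_of_lt hs]
    have hint : IntegrableOn (fun u => A u (d u)) (Ioi s) :=
      integrableOn_apply hA measurableSet_Ioi (hd.mono fun u hu => ht.trans (hts.trans hu.le))
        fun u hu => hC u (hts.trans hu.le)
    have hlim := (intervalIntegral_tendsto_integral_Ioi s hint tendsto_id).congr'
      ((eventually_ge_atTop s).mono fun T hT =>
        (hincr s (ht.trans hts) T (ht.trans (hts.trans hT))).symm)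
    rw [integralFrom_top, ← tendsto_nhds_unique ((htop rfl).sub_const (d s)) hlim, zero_sub,
      neg_neg]
  | coe r =>
    have hr : 0 ≤ r := WithTop.coe_nonneg.1 hτ
    obtain ⟨C, hC⟩ := isCompact_uIcc.exists_bound_of_continuousOn
      (hd.mono fun u hu => le_trans (le_min hr ht) hu.1)
    refine ⟨⟨C, forall_mem_image.2 fun s hs => hC s (uIoc_subset_uIcc hs)⟩, fun s hs => ?_⟩
    have hs0 : s ∈ Ici (0 : ℝ) := by
      rcases hs with rfl | hs
      exacts [ht, (le_min hr ht).trans hs.1.le]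
    rw [integralFrom_coe, ← hincr r hr s hs0, hfin r rfl, sub_zero]

def IsIntegralSolution (A : ℝ → V →L[ℝ] V) (a : ℝ → V) (τ : WithTop ℝ) (ζ : V) (x : ℝ → V) :
    Prop :=
  ContinuousOn x (Ici 0) ∧
    (∀ t ∈ Ici (0 : ℝ), x t = x 0 + ∫ s in (0 : ℝ)..t, (A s (x s) + a s)) ∧
    (∀ t : ℝ, τ = t → x t = ζ) ∧ (τ = ⊤ → Tendsto x atTop (𝓝 ζ))

theorem isIntegralSolution_indicator_iff {τ : WithTop ℝ} {ζ : V} {x : ℝ → V} :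
    IsIntegralSolution ((Ici 0).indicator A) ((Ici 0).indicator a) τ ζ x ↔
      IsIntegralSolution A a τ ζ x := by
  refine and_congr_right' (and_congr_left' (forall₂_congr fun t ht => ?_))
  rw [integral_congr fun s hs => ?_]
  rw [uIcc_of_le ht] at hs
  simp [indicator_of_mem (show s ∈ Ici 0 from hs.1)]

theorem exists_isIntegralSolution [CompleteSpace V] (hA : Integrable A) (ha : Integrable a)
    (ζ : V) (τ : WithTop ℝ) :
    ∃ x : ℝ →ᵇ V, IsIntegralSolution A a τ ζ x ∧ ∃ L, Tendsto x atTop (𝓝 L) := by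
  obtain ⟨x, hx⟩ := exists_eq_add_integralFrom hA ha ζ τ
  have hg := integrable_apply_add hA ha x
  refine ⟨x, ⟨x.continuous.continuousOn, fun t _ => ?_, fun r hr => ?_, fun hτ => ?_⟩, _,
    (tendsto_integralFrom_atTop hg τ).const_add ζ |>.congr fun t => (hx t).symm⟩
  · rw [hx t, hx 0, add_assoc, ← integralFrom_sub_integralFrom hg τ t 0, add_sub_cancel]
  · subst hr
    rw [hx, integralFrom_coe, integral_same, add_zero]
  · subst hτ
    simpa using ((tendsto_integralFrom_top hg).const_add ζ).congr fun t => (hx t).symm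

theorem IsIntegralSolution.eqOn (hA : Integrable A) (ha : Integrable a) {τ : WithTop ℝ}
    (hτ : 0 ≤ τ) {ζ : V} {x y : ℝ → V} (hx : IsIntegralSolution A a τ ζ x)
    (hy : IsIntegralSolution A a τ ζ y) : EqOn x y (Ici 0) := by
  obtain ⟨hxc, hxeq, hxfin, hxtop⟩ := hx
  obtain ⟨hyc, hyeq, hyfin, hytop⟩ := hy
  have hii : ∀ {z : ℝ → V}, ContinuousOn z (Ici 0) → ∀ t ∈ Ici (0 : ℝ),
      IntervalIntegrable (fun s => A s (z s) + a s) volume 0 t := fun hz t ht =>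
    (intervalIntegrable_apply hA (hz.mono fun u hu => le_trans (le_min le_rfl ht) hu.1)).add
      ha.intervalIntegrable
  have hdeq : ∀ t ∈ Ici (0 : ℝ),
      x t - y t = (x 0 - y 0) + ∫ s in 0..t, A s (x s - y s) := fun t ht => by
    rw [hxeq t ht, hyeq t ht, add_sub_add_comm, ← integral_sub (hii hxc t ht) (hii hyc t ht)]
    simp [map_sub]
  exact fun t ht => sub_eq_zero.1 (eqOn_zero_of_eq_integral (d := fun t => x t - y t) hA hτ
    (hxc.sub hyc) hdeq
    (fun r hr => by simp [hxfin r hr, hyfin r hr]) (fun h => by simpa using (hxtop h).sub (hytop h))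
    ht)

end linear

theorem PiecewiseContinuousOn.aestronglyMeasurable {E : Type*} [NormedAddCommGroup E]
    {f : ℝ → E} {b c : ℝ} (hf : PiecewiseContinuousOn f b c) :
    AEStronglyMeasurable f (volume.restrict (Icc b c)) := by
  obtain ⟨s, hs, -, -⟩ := hf
  have hcont : ContinuousOn f (Icc b c \ s) := fun t ht => (hs t ht.1 ht.2).mono sdiff_subset
  rw [← Measure.restrict_congr_set (sdiff_ae_eq_self.2
    (measure_mono_null inter_subset_right (s.finite_toSet.measure_zero volume)))]
  exact hcont.aestronglyMeasurable (measurableSet_Icc.diff s.finite_toSet.measurableSet)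

theorem integrable_indicator_Ici_of_piecewiseContinuousOn {E : Type*} [NormedAddCommGroup E]
    {f : ℝ → E} (hf : ∀ T : ℝ, PiecewiseContinuousOn f 0 T)
    (hfint : IntegrableOn (fun t => ‖f t‖) (Ici 0)) : Integrable ((Ici 0).indicator f) := by
  have hIci : Ici (0 : ℝ) = ⋃ n : ℕ, Icc 0 (n : ℝ) := by
    ext t
    simp only [mem_Ici, mem_iUnion, mem_Icc]
    exact ⟨fun ht => ⟨⌈t⌉₊, ht, Nat.le_ceil t⟩, fun ⟨_, ht, _⟩ => ht⟩
  have hmeas : AEStronglyMeasurable f (volume.restrict (Ici 0)) := by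
    rw [hIci]
    exact aestronglyMeasurable_iUnion_iff.2 fun n => (hf n).aestronglyMeasurable
  exact (integrable_indicator_iff measurableSet_Ici).2 ((integrable_norm_iff hmeas).1 hfint)

/-- Linear ODE on `[0,∞)` with integrable coefficients: for every `ζ ∈ ℝⁿ` and every
`τ ∈ [0,∞]` (where the boundary condition at `τ = ∞` means `lim_{t→∞} x(t) = ζ`)
there is a unique solution of `ẋ = A(t)x + a(t)`, `x(τ) = ζ`; the solution is
bounded and has a limit at infinity. -/
theorem linear_ode_infinite_horizon
    {n : ℕ}
    (A : ℝ → (EuclideanSpace ℝ (Fin n) →L[ℝ] EuclideanSpace ℝ (Fin n)))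
    (a : ℝ → EuclideanSpace ℝ (Fin n))
    (hApc : ∀ T : ℝ, PiecewiseContinuousOn A 0 T)
    (hapc : ∀ T : ℝ, PiecewiseContinuousOn a 0 T)
    (hAint : MeasureTheory.IntegrableOn (fun t => ‖A t‖) (Set.Ici 0))
    (haint : MeasureTheory.IntegrableOn (fun t => ‖a t‖) (Set.Ici 0))
    (ζ : EuclideanSpace ℝ (Fin n))
    (τ : WithTop ℝ) (hτ : ∀ t : ℝ, τ = (t : WithTop ℝ) → 0 ≤ t) :
    ∃ x : ℝ → EuclideanSpace ℝ (Fin n),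
      (ContinuousOn x (Set.Ici 0) ∧
       (∀ t ∈ Set.Ici (0:ℝ), x t = x 0 + ∫ s in (0:ℝ)..t, (A s (x s) + a s)) ∧
       (∀ t : ℝ, τ = (t : WithTop ℝ) → x t = ζ) ∧
       (τ = ⊤ → Filter.Tendsto x Filter.atTop (nhds ζ)) ∧
       (∃ C : ℝ, ∀ t ∈ Set.Ici (0:ℝ), ‖x t‖ ≤ C) ∧
       (∃ L, Filter.Tendsto x Filter.atTop (nhds L))) ∧
      ∀ y : ℝ → EuclideanSpace ℝ (Fin n),
        (ContinuousOn y (Set.Ici 0) ∧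
         (∀ t ∈ Set.Ici (0:ℝ), y t = y 0 + ∫ s in (0:ℝ)..t, (A s (y s) + a s)) ∧
         (∀ t : ℝ, τ = (t : WithTop ℝ) → y t = ζ) ∧
         (τ = ⊤ → Filter.Tendsto y Filter.atTop (nhds ζ))) →
        Set.EqOn y x (Set.Ici 0) := by
  have hτ0 : 0 ≤ τ := by
    cases τ with
    | top => exact le_top
    | coe r => exact WithTop.coe_nonneg.2 (hτ r rfl)
  have hA := integrable_indicator_Ici_of_piecewiseContinuousOn hApc hAint
  have ha := integrable_indicator_Ici_of_piecewiseContinuousOn hapc haint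
  obtain ⟨x, hx, L, hL⟩ := exists_isIntegralSolution hA ha ζ τ
  obtain ⟨hxc, hxeq, hxfin, hxtop⟩ := isIntegralSolution_indicator_iff.1 hx
  exact ⟨x, ⟨hxc, hxeq, hxfin, hxtop, ⟨‖x‖, fun t _ => x.norm_coe_le_norm t⟩, L, hL⟩,
    fun y hy => (isIntegralSolution_indicator_iff.2 hy).eqOn hA ha hτ0 hx⟩
end

section
/- In the concave investment model with α ∈ (0,1), K₀ > 0, T fixed with αT − K₀^{1−α} > 0, and switching time τ₂ = αT − K₀^{1−α}, the objective value of the candidate optimal process (u* = 1 on [0,τ₂), u* = 0 on [τ₂,T], K*(t) = ((1−α)t + K₀^{1−α})^{1/(1−α)} on [0,τ₂) and constant K*(τ₂) afterwards) equals ∫_{τ₂}^T K*(τ₂)^α dt = α^{α/(1−α)} · ((1−α)T + K₀^{1−α})^{1/(1−α)}. -/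
open MeasureTheory intervalIntegral Real Set
open scoped Interval

/-! The candidate control invests everything until `τ₂` and consumes everything afterwards, so the
objective only sees the constant `K*(τ₂)^α` on `[τ₂, T]`. The switching time is chosen so that, with
`B = (1-α)T + K₀^{1-α}`, one has `T - τ₂ = B` and `(1-α)τ₂ + K₀^{1-α} = αB`; hence the objective is
`B · (αB)^{α/(1-α)} = α^{α/(1-α)} B^{1/(1-α)}`. -/

theorem intervalIntegral_ite_lt_zero {E : Type*} [NormedAddCommGroup E] [NormedSpace ℝ E]
    (f : ℝ → E) {a x y : ℝ} (hxa : x ≤ a) (hay : a ≤ y) :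
    (∫ t in x..y, if t < a then 0 else f t) = ∫ t in a..y, f t := by
  have h_indicator : (fun t => if t < a then 0 else f t) =ᵐ[volume] (Ioi a).indicator f := by
    have h_Ici : (fun t => if t < a then 0 else f t) = (Ici a).indicator f := by
      funext t
      simp only [indicator_apply, mem_Ici, ← not_lt]
      split_ifs <;> rfl
    rw [h_Ici]
    exact indicator_ae_eq_of_ae_eq_set Ioi_ae_eq_Ici.symm
  calc (∫ t in x..y, if t < a then 0 else f t)
      = ∫ t in x..y, (Ioi a).indicator f t := integral_congr_ae (h_indicator.mono fun _ ht _ => ht)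
    _ = ∫ t in Ioc x y, (Ioi a).indicator f t := integral_of_le (hxa.trans hay)
    _ = ∫ t in Ioc x y ∩ Ioi a, f t := setIntegral_indicator measurableSet_Ioi
    _ = ∫ t in Ioc a y, f t := by rw [Ioc_inter_Ioi, sup_of_le_right hxa]
    _ = ∫ t in a..y, f t := (integral_of_le hay).symm

theorem mul_rpow_one_div_one_sub_rpow {α B : ℝ} (hα₀ : 0 ≤ α) (hα₁ : α ≠ 1) (hB : 0 < B) :
    B * ((α * B) ^ (1 / (1 - α))) ^ α = α ^ (α / (1 - α)) * B ^ (1 / (1 - α)) := by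
  have h_exp : 1 / (1 - α) = α / (1 - α) + 1 := by
    field_simp [sub_ne_zero.mpr hα₁.symm]
    ring
  rw [← rpow_mul (by positivity), one_div_mul_eq_div, mul_rpow hα₀ hB.le, h_exp,
    rpow_add hB, rpow_one]
  ring

/-- Objective value of the candidate optimal process in the concave investment model:
with switching time `τ₂ = αT - K₀^{1-α}`, control `u* = 1_{[0,τ₂)}` and state
`K*(t) = ((1-α)t + K₀^{1-α})^{1/(1-α)}` on `[0,τ₂)`, constant afterwards, one has
`∫₀^T (1-u*)K*^α dt = ∫_{τ₂}^T K*(τ₂)^α dt = α^{α/(1-α)}·((1-α)T + K₀^{1-α})^{1/(1-α)}`. -/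
theorem concave_investment_objective_value
    (α K₀ T : ℝ) (hα : α ∈ Set.Ioo (0:ℝ) 1) (hK₀ : 0 < K₀)
    (hT : 0 < α * T - K₀ ^ (1 - α))
    (τ₂ : ℝ) (hτ₂ : τ₂ = α * T - K₀ ^ (1 - α))
    (u : ℝ → ℝ) (K : ℝ → ℝ)
    (hu : u = fun t => if t < τ₂ then 1 else 0)
    (hK : K = fun t => if t < τ₂ then ((1 - α) * t + K₀ ^ (1 - α)) ^ (1 / (1 - α))
                       else ((1 - α) * τ₂ + K₀ ^ (1 - α)) ^ (1 / (1 - α))) :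
    (∫ t in (0:ℝ)..T, (1 - u t) * K t ^ α) = (∫ t in τ₂..T, K τ₂ ^ α) ∧
    (∫ t in (0:ℝ)..T, (1 - u t) * K t ^ α)
      = α ^ (α / (1 - α)) * ((1 - α) * T + K₀ ^ (1 - α)) ^ (1 / (1 - α)) := by
  obtain ⟨hα₀, hα₁⟩ := hα
  have hK₀_rpow : 0 < K₀ ^ (1 - α) := rpow_pos_of_pos hK₀ _
  have hB : 0 < (1 - α) * T + K₀ ^ (1 - α) := by nlinarith
  have h_integrand : (fun t => (1 - u t) * K t ^ α) = fun t => if t < τ₂ then 0 else K τ₂ ^ α := by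
    funext t
    by_cases h : t < τ₂ <;> simp [hu, hK, h]
  have h_objective : (∫ t in (0:ℝ)..T, (1 - u t) * K t ^ α) = ∫ t in τ₂..T, K τ₂ ^ α := by
    rw [h_integrand]
    exact intervalIntegral_ite_lt_zero _ (by linarith) (by linarith)
  refine ⟨h_objective, ?_⟩
  have h_duration : T - τ₂ = (1 - α) * T + K₀ ^ (1 - α) := by rw [hτ₂]; ring
  have h_capital : (1 - α) * τ₂ + K₀ ^ (1 - α) = α * ((1 - α) * T + K₀ ^ (1 - α)) := by
    rw [hτ₂]; ring
  rw [h_objective, intervalIntegral.integral_const, smul_eq_mul, h_duration, hK]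
  simp only [lt_irrefl, if_false, h_capital]
  exact mul_rpow_one_div_one_sub_rpow hα₀.le hα₁.ne hB
end

section
/- In the two-sector model with adjoint equations ṗ(t) = −u*(t)p(t) − (1−u*(t))q(t), p(T) = 0 and q̇(t) = −1, q(T) = 0 on [0,T] with T > 2, the functions q(t) = T−t and p(t) = 2e^{T−(t+2)} for t ∈ [0,T−2), p(t) = (T−t)²/2 for t ∈ [T−2,T], together with u*(t) = 1_{[0,T−2)}(t), satisfy the system, p and q are continuous, p(T−2) = q(T−2) = 2, and p(t) > q(t) on [0,T−2) while p(t) ≤ q(t) on [T−2,T]. -/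
/-!
Both branches of `p` are explicit solutions of the linear adjoint equation on their own side of
the switching time `T - 2` (`ṗ = -p` before it, `ṗ = -q` after it), and they meet at the value
`2 = q (T - 2)`. With `x = T - 2 - t`, the comparison `p > q` before the switch is
`2 eˣ > x + 2`, which follows from `eˣ ≥ 1 + x`; after it, `p ≤ q` is `y² / 2 ≤ y` for
`y = T - t ∈ [0, 2]`.
-/

open Real

theorem add_two_lt_two_mul_exp {x : ℝ} (hx : 0 < x) : x + 2 < 2 * exp x := by
  linarith [add_one_le_exp x]

theorem sq_div_two_le_self {y : ℝ} (h0 : 0 ≤ y) (h2 : y ≤ 2) : y ^ 2 / 2 ≤ y := by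
  nlinarith

theorem Continuous.ite_lt_const {α β : Type*} [TopologicalSpace α] [LinearOrder β]
    [TopologicalSpace β] [OrderClosedTopology β] {f g : β → α} {a : β}
    (hf : Continuous f) (hg : Continuous g) (ha : f a = g a) :
    Continuous fun s => if s < a then f s else g s := by
  simp only [← not_le, ite_not]
  exact hg.if_le hf continuous_const continuous_id fun s hs => hs ▸ ha.symm

section Piecewise

variable {E : Type*} [NormedAddCommGroup E] [NormedSpace ℝ E] {f g : ℝ → E} {a t : ℝ}

theorem HasDerivAt.ite_lt_of_lt {f' : E} (hf : HasDerivAt f f' t) (ht : t < a) :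
    HasDerivAt (fun s => if s < a then f s else g s) f' t :=
  hf.congr_of_eventuallyEq <| by
    filter_upwards [Iio_mem_nhds ht] with s hs
    exact if_pos hs

theorem HasDerivAt.ite_lt_of_gt {g' : E} (hg : HasDerivAt g g' t) (ht : a < t) :
    HasDerivAt (fun s => if s < a then f s else g s) g' t :=
  hg.congr_of_eventuallyEq <| by
    filter_upwards [Ioi_mem_nhds ht] with s hs
    exact if_neg (not_lt.2 hs.le)

end Piecewise

theorem hasDerivAt_two_mul_exp_sub (T t : ℝ) :
    HasDerivAt (fun s => 2 * exp (T - (s + 2))) (-(2 * exp (T - (t + 2)))) t := by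
  simpa using ((((hasDerivAt_id t).add_const 2).const_sub T).exp).const_mul 2

theorem hasDerivAt_sub_sq_div_two (T t : ℝ) :
    HasDerivAt (fun s => (T - s) ^ 2 / 2) (-(T - t)) t :=
  ((((hasDerivAt_id' t).const_sub T).fun_pow 2).div_const 2).congr_deriv (by ring)

theorem two_sector_adjoint_verification_general
    (T : ℝ) (p q u : ℝ → ℝ)
    (hq : q = fun t => T - t)
    (hp : p = fun t => if t < T - 2 then 2 * exp (T - (t + 2)) else (T - t)^2 / 2)
    (hu : u = fun t => if t < T - 2 then 1 else 0) :
    (∀ t, HasDerivAt q (-1) t) ∧ q T = 0 ∧ p T = 0 ∧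
    (∀ t ∈ Set.Ioo 0 T, t ≠ T - 2 →
      HasDerivAt p (-(u t * p t) - (1 - u t) * q t) t) ∧
    Continuous p ∧ Continuous q ∧
    p (T - 2) = 2 ∧ q (T - 2) = 2 ∧
    (∀ t ∈ Set.Ico 0 (T - 2), p t > q t) ∧
    (∀ t ∈ Set.Icc (T - 2) T, p t ≤ q t) := by
  subst hq hp hu
  refine ⟨fun t => by simpa using (hasDerivAt_id t).const_sub T, by simp, by simp,
    ?_, ?_, by fun_prop, by norm_num, by norm_num, ?_, ?_⟩
  · intro t _ hne
    rcases hne.lt_or_gt with ht | ht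
    · simpa [ht] using (hasDerivAt_two_mul_exp_sub T t).ite_lt_of_lt ht
    · simpa [ht.not_gt] using (hasDerivAt_sub_sq_div_two T t).ite_lt_of_gt ht
  · exact Continuous.ite_lt_const (by fun_prop) (by fun_prop) (by norm_num)
  · rintro t ⟨-, ht⟩
    simp only [if_pos ht, gt_iff_lt]
    convert add_two_lt_two_mul_exp (sub_pos.2 ht) using 3 <;> ring
  · rintro t ⟨ht₁, ht₂⟩
    simpa [ht₁.not_gt] using sq_div_two_le_self (sub_nonneg.2 ht₂) (by linarith)

/-- Verification of the adjoint functions in the two-sector model: with `T > 2`,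
`q(t) = T - t`, `p(t) = 2e^{T-(t+2)}` on `[0,T-2)` and `p(t) = (T-t)²/2` on `[T-2,T]`,
and `u*(t) = 1_{[0,T-2)}(t)`, the coupled adjoint system with terminal conditions
`p(T) = q(T) = 0` holds, `p` and `q` are continuous, `p(T-2) = q(T-2) = 2`, and
`p > q` on `[0,T-2)` while `p ≤ q` on `[T-2,T]`. -/
theorem two_sector_adjoint_verification
    (T : ℝ) (hT : 2 < T) (p q u : ℝ → ℝ)
    (hq : q = fun t => T - t)
    (hp : p = fun t => if t < T - 2 then 2 * exp (T - (t + 2)) else (T - t)^2 / 2)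
    (hu : u = fun t => if t < T - 2 then 1 else 0) :
    (∀ t, HasDerivAt q (-1) t) ∧ q T = 0 ∧ p T = 0 ∧
    (∀ t ∈ Set.Ioo 0 T, t ≠ T - 2 →
      HasDerivAt p (-(u t * p t) - (1 - u t) * q t) t) ∧
    Continuous p ∧ Continuous q ∧
    p (T - 2) = 2 ∧ q (T - 2) = 2 ∧
    (∀ t ∈ Set.Ico 0 (T - 2), p t > q t) ∧
    (∀ t ∈ Set.Icc (T - 2) T, p t ≤ q t) :=
  two_sector_adjoint_verification_general T p q u hq hp hu
end
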